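/- arXiv:2603.17142 — 3 statements merged into one kernel-verified Lean document; each statement's English description precedes it below -/
import Mathlib

section
/- Let M be a d×d real matrix such that no sum of k eigenvalues of M (with repetition) equals zero. Then for any k-th order tensor C, the k-th order continuous Lyapunov equation K ×_1 M + ... + K ×_k M + C = 0 has a unique solution K. -/
open Finset Matrix

/-- The `i`-mode (Tucker) product of a `k`-th order `d`-dimensional tensor with a matrix. -/
def modeProd {d k : ℕ} (K : (Fin k → Fin d) → ℝ) (M : Matrix (Fin d) (Fin d) ℝ)
    (i : Fin k) : (Fin k → Fin d) → ℝ :=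
  fun a => ∑ x : Fin d, M (a i) x * K (Function.update a i x)

/-!
Each mode product `K ↦ K ×ᵢ P` is the image of `P` under an algebra homomorphism from matrices to
endomorphisms of tensor space, so it is annihilated by the characteristic polynomial of `P`, and
mode products along different modes commute. Over an algebraically closed field the joint
generalized eigenspaces of a commuting family `Aᵢ` span the space, and on the one for `χ` the sum
`∑ᵢ Aᵢ` has the single generalized eigenvalue `∑ᵢ χᵢ`; by independence of generalized eigenspaces
every eigenvalue of `∑ᵢ Aᵢ` is therefore a sum of eigenvalues of the `Aᵢ`, i.e. of roots of the
characteristic polynomial. So `0` is not an eigenvalue, the operator is injective over `ℂ`, hence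
over `ℝ` by complexification, and injective endomorphisms of finite-dimensional spaces are bijective.
-/

open Polynomial

namespace Module.End

section CommRing

variable {R M : Type*} [CommRing R] [AddCommGroup M] [Module R M]

theorem hasEigenvalue_iff_maxGenEigenspace_ne_bot {f : End R M} {μ : R} :
    f.HasEigenvalue μ ↔ f.maxGenEigenspace μ ≠ ⊥ := by
  refine ⟨fun h => ne_bot_of_le_ne_bot h eigenspace_le_maxGenEigenspace, fun h => ?_⟩
  obtain ⟨k, hk⟩ : ∃ k : ℕ, f.genEigenspace μ k ≠ ⊥ := by
    simpa [← iSup_genEigenspace_eq] using h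
  exact hasEigenvalue_of_hasGenEigenvalue hk

theorem HasEigenvalue.isRoot_of_aeval_eq_zero [IsDomain R] [IsTorsionFree R M] {f : End R M}
    {μ : R} {p : R[X]} (hμ : f.HasEigenvalue μ) (hp : aeval f p = 0) : p.IsRoot μ := by
  obtain ⟨x, hx⟩ := hμ.exists_hasEigenvector
  have h := aeval_apply_of_hasEigenvector (p := p) hx
  rw [hp, LinearMap.zero_apply, eq_comm, smul_eq_zero] at h
  exact h.resolve_right hx.2

theorem iInf_maxGenEigenspace_le_maxGenEigenspace_sum {ι : Type*} [Fintype ι] (f : ι → End R M)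
    (hf : Pairwise fun i j => Commute (f i) (f j)) (χ : ι → R) :
    ⨅ i, (f i).maxGenEigenspace (χ i) ≤ (∑ i, f i).maxGenEigenspace (∑ i, χ i) := by
  classical
  suffices ∀ s : Finset ι, ⨅ i, (f i).maxGenEigenspace (χ i) ≤
      (∑ i ∈ s, f i).maxGenEigenspace (∑ i ∈ s, χ i) from this _
  intro s
  induction s using Finset.induction_on with
  | empty =>
    intro x _
    simp only [sum_empty, mem_maxGenEigenspace]
    exact ⟨1, by simp⟩
  | insert a s ha ih =>
    have hcomm : Commute (f a) (∑ i ∈ s, f i) :=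
      Commute.sum_right _ _ _ fun i hi => hf (ne_of_mem_of_not_mem hi ha).symm
    rw [sum_insert ha, sum_insert ha]
    exact (le_inf (iInf_le _ a) ih).trans (genEigenspace_inf_le_add _ _ _ _ ⊤ ⊤ hcomm)

end CommRing

theorem exists_hasEigenvalue_sum_eq_of_commute {K V : Type*} [Field K] [IsAlgClosed K]
    [AddCommGroup V] [Module K V] [FiniteDimensional K V] {ι : Type*} [Fintype ι]
    (f : ι → End K V) (hf : Pairwise fun i j => Commute (f i) (f j)) {μ : K}
    (hμ : (∑ i, f i).HasEigenvalue μ) :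
    ∃ χ : ι → K, (∀ i, (f i).HasEigenvalue (χ i)) ∧ ∑ i, χ i = μ := by
  by_contra! hne
  have hle : ∀ χ : ι → K, ⨅ i, (f i).maxGenEigenspace (χ i) ≤
      ⨆ (ν) (_ : ν ≠ μ), (∑ i, f i).maxGenEigenspace ν := by
    intro χ
    by_cases hχ : ∀ i, (f i).HasEigenvalue (χ i)
    · exact (iInf_maxGenEigenspace_le_maxGenEigenspace_sum f hf χ).trans
        (le_iSup₂_of_le (∑ i, χ i) (hne χ hχ) le_rfl)
    · obtain ⟨i, hi⟩ := not_forall.mp hχ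
      rw [hasEigenvalue_iff_maxGenEigenspace_ne_bot, not_not] at hi
      exact (iInf_le _ i).trans (hi ▸ bot_le)
  have htop : ⨆ (ν) (_ : ν ≠ μ), (∑ i, f i).maxGenEigenspace ν = ⊤ := by
    refine eq_top_iff.mpr ?_
    rw [← iSup_iInf_maxGenEigenspace_eq_top_of_iSup_maxGenEigenspace_eq_top_of_commute f hf
      fun i => iSup_maxGenEigenspace_eq_top (f i)]
    exact iSup_le hle
  have hdisj := (∑ i, f i).independent_maxGenEigenspace μ
  rw [htop, disjoint_top] at hdisj
  exact hasEigenvalue_iff_maxGenEigenspace_ne_bot.mp hμ hdisj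

end Module.End

section ModeProduct

variable {R : Type*} [CommRing R] {d k : ℕ}

def modeProdAlgHom (i : Fin k) :
    Matrix (Fin d) (Fin d) R →ₐ[R] Module.End R ((Fin k → Fin d) → R) :=
  AlgHom.ofLinearMap
    (LinearMap.mk₂ R (fun P K a => ∑ x, P (a i) x * K (Function.update a i x))
      (fun P Q K => by ext a; simp [add_mul, sum_add_distrib])
      (fun c P K => by ext a; simp [mul_sum, mul_assoc])
      (fun P K L => by ext a; simp [mul_add, sum_add_distrib])
      (fun c P K => by ext a; simp [mul_sum, mul_left_comm]))
    (by ext K a; simp [one_apply])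
    (fun P Q => LinearMap.ext fun K => funext fun a => by
      simp only [LinearMap.mk₂_apply, Module.End.mul_apply, Matrix.mul_apply, sum_mul, mul_sum,
        mul_assoc, Function.update_self, Function.update_idem]
      exact sum_comm)

theorem modeProdAlgHom_apply (i : Fin k) (P : Matrix (Fin d) (Fin d) R)
    (K : (Fin k → Fin d) → R) (a : Fin k → Fin d) :
    modeProdAlgHom i P K a = ∑ x, P (a i) x * K (Function.update a i x) :=
  rfl

theorem commute_modeProdAlgHom {i j : Fin k} (hij : i ≠ j) (P Q : Matrix (Fin d) (Fin d) R) :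
    Commute (modeProdAlgHom i P) (modeProdAlgHom j Q) := by
  rw [commute_iff_eq]
  refine LinearMap.ext fun K => funext fun a => ?_
  simp only [Module.End.mul_apply, modeProdAlgHom_apply, Function.update_of_ne hij,
    Function.update_of_ne hij.symm, mul_sum, Function.update_comm hij]
  rw [sum_comm]
  exact sum_congr rfl fun _ _ => sum_congr rfl fun _ _ => mul_left_comm _ _ _

theorem injective_sum_modeProdAlgHom_of_isRoot_charpoly {K : Type*} [Field K] [IsAlgClosed K]
    (P : Matrix (Fin d) (Fin d) K)
    (hP : ∀ f : Fin k → K, (∀ i, P.charpoly.IsRoot (f i)) → ∑ i, f i ≠ 0) :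
    Function.Injective ⇑(∑ i : Fin k, modeProdAlgHom i P) := by
  refine (injective_iff_map_eq_zero _).mpr fun T hT => ?_
  by_contra hT0
  obtain ⟨χ, hχ, hχ0⟩ := Module.End.exists_hasEigenvalue_sum_eq_of_commute _
    (fun i j hij => commute_modeProdAlgHom hij P P)
    (Module.End.hasEigenvalue_of_hasEigenvector (μ := 0)
      ⟨Module.End.mem_eigenspace_iff.mpr (by rw [hT, zero_smul]), hT0⟩)
  refine hP χ (fun i => (hχ i).isRoot_of_aeval_eq_zero ?_) hχ0
  rw [aeval_algHom_apply, aeval_self_charpoly, map_zero]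

theorem injective_sum_modeProdAlgHom_of_map {S : Type*} [CommRing S] {φ : R →+* S}
    (hφ : Function.Injective φ) (P : Matrix (Fin d) (Fin d) R)
    (h : Function.Injective ⇑(∑ i : Fin k, modeProdAlgHom i (P.map φ))) :
    Function.Injective ⇑(∑ i : Fin k, modeProdAlgHom i P) := by
  intro T T' hTT'
  refine hφ.comp_left (h ?_)
  ext a
  simpa [modeProdAlgHom_apply, map_sum] using congrArg (fun F => φ (F a)) hTT'

end ModeProduct

theorem stmt_4_general (d k : ℕ) (M : Matrix (Fin d) (Fin d) ℝ)
    (hM : ∀ f : Fin k → ℂ,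
      (∀ i, (M.map Complex.ofReal).charpoly.IsRoot (f i)) → (∑ i : Fin k, f i) ≠ 0)
    (C : (Fin k → Fin d) → ℝ) :
    ∃! K : (Fin k → Fin d) → ℝ,
      ∀ a : Fin k → Fin d, (∑ i : Fin k, modeProd K M i a) + C a = 0 := by
  set L := ∑ i : Fin k, modeProdAlgHom i M
  have hinj : Function.Injective L :=
    injective_sum_modeProdAlgHom_of_map (φ := Complex.ofRealHom) Complex.ofReal_injective M
      (injective_sum_modeProdAlgHom_of_isRoot_charpoly _ hM)
  have hL : ∀ K a, L K a = ∑ i, modeProd K M i a := fun K a => by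
    simp [L, modeProdAlgHom_apply, modeProd]
  simp_rw [add_eq_zero_iff_eq_neg, ← hL, ← Pi.neg_apply, ← funext_iff]
  exact Function.Bijective.existsUnique ⟨hinj, LinearMap.injective_iff_surjective.mp hinj⟩ (-C)

/-- If no sum of `k` (complex) eigenvalues of `M`, with repetition, equals zero, then for
every `k`-th order tensor `C` the `k`-th order continuous Lyapunov equation
`K ×₁ M + ⋯ + K ×ₖ M + C = 0` has a unique solution `K`. -/
theorem stmt_4 (d k : ℕ) (hk : 1 ≤ k) (M : Matrix (Fin d) (Fin d) ℝ)
    (hM : ∀ f : Fin k → ℂ,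
      (∀ i, (M.map Complex.ofReal).charpoly.IsRoot (f i)) → (∑ i : Fin k, f i) ≠ 0)
    (C : (Fin k → Fin d) → ℝ) :
    ∃! K : (Fin k → Fin d) → ℝ,
      ∀ a : Fin k → Fin d, (∑ i : Fin k, modeProd K M i a) + C a = 0 :=
  stmt_4_general d k M hM C
end

section
/- Let G: ℝ^{b×n} → ℝ^n map a matrix X to the right singular vector of its smallest singular value, and suppose A ∈ ℝ^{b×n} has a simple smallest singular value equal to zero with right singular vector v (‖v‖=1). Then G is differentiable at A with Jacobian DG(A) = -(vᵀ ⊗ A⁺) with respect to the vectorization of X, where A⁺ is the Moore–Penrose inverse of A. -/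
/-!
A unit eigenpair `(u, μ)` of `XᵀX` is a solution of `F (X, u, μ) = (XᵀX u - μ u, u ⬝ᵥ u) = (0, 1)`.
At `(A, v, 0)` the partial derivative of `F` in `(u, μ)` is `(y, ν) ↦ (AᵀA y - ν v, 2 v ⬝ᵥ y)`,
which is injective because `ker AᵀA` is the line through `v`. The implicit function theorem
gives a differentiable solution branch `X ↦ (u X, μ X)` through `(v, 0)`, and continuity of `G`
forces `G` onto this branch near `A`. The derivative of the branch in direction `Y` is `-(y, ν)`
for the solution of `AᵀA y - ν v = AᵀY v`, `v ⬝ᵥ y = 0`, and that solution is `(A⁺Y v, 0)`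
because `AᵀAA⁺ = Aᵀ` and `vᵀA⁺ = 0`.
-/
open Matrix

attribute [local instance] Matrix.normedAddCommGroup Matrix.normedSpace

/-- `B` is the Moore–Penrose pseudoinverse of `A`: the four Penrose conditions. -/
def IsMoorePenrose {b n : ℕ} (A : Matrix (Fin b) (Fin n) ℝ)
    (B : Matrix (Fin n) (Fin b) ℝ) : Prop :=
  A * B * A = A ∧ B * A * B = B ∧ (A * B)ᵀ = A * B ∧ (B * A)ᵀ = B * A

/-- The candidate derivative `vec(Y) ↦ -(vᵀ ⊗ A⁺) vec(Y)`, i.e. `Y ↦ -A⁺ Y v`,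
as a linear map. -/
noncomputable def jacMap {b n : ℕ} (Apinv : Matrix (Fin n) (Fin b) ℝ) (v : Fin n → ℝ) :
    Matrix (Fin b) (Fin n) ℝ →ₗ[ℝ] (Fin n → ℝ) where
  toFun Y := -(Apinv.mulVec (Y.mulVec v))
  map_add' Y Z := by
    simp [Matrix.add_mulVec, Matrix.mulVec_add, neg_add, add_comm]
  map_smul' c Y := by
    simp [Matrix.smul_mulVec, Matrix.mulVec_smul]

open Filter Topology

namespace IsMoorePenrose

variable {b n : ℕ} {A : Matrix (Fin b) (Fin n) ℝ} {B : Matrix (Fin n) (Fin b) ℝ}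

theorem transpose_mul_self_mul (h : IsMoorePenrose A B) : Aᵀ * A * B = Aᵀ := by
  obtain ⟨hABA, -, hAB, -⟩ := h
  calc Aᵀ * A * B = Aᵀ * (A * B)ᵀ := by rw [hAB, Matrix.mul_assoc]
    _ = Aᵀ := by rw [← transpose_mul, hABA]

theorem vecMul_eq_zero_of_mulVec_eq_zero (h : IsMoorePenrose A B) {v : Fin n → ℝ}
    (hv : A *ᵥ v = 0) : v ᵥ* B = 0 := by
  obtain ⟨-, hBAB, -, hBA⟩ := h
  have hvBA : v ᵥ* (B * A) = 0 := by
    rw [← hBA, vecMul_transpose, ← mulVec_mulVec, hv, mulVec_zero]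
  rw [← hBAB, ← vecMul_vecMul, hvBA, zero_vecMul]

end IsMoorePenrose

theorem ContinuousLinearMap.isInvertible_of_injective {𝕜 E : Type*} [NontriviallyNormedField 𝕜]
    [CompleteSpace 𝕜] [NormedAddCommGroup E] [NormedSpace 𝕜 E] [FiniteDimensional 𝕜 E]
    {f : E →L[𝕜] E} (hf : Function.Injective f) : f.IsInvertible :=
  ⟨(LinearEquiv.ofInjectiveEndo (f : E →ₗ[𝕜] E) hf).toContinuousLinearEquiv, rfl⟩

section EigenEquation

variable {m n : Type*} [Fintype m] [Fintype n]

/-- `(X *ᵥ u) ᵥ* X` is `XᵀX u`, written through the bilinear maps `mulVec` and `vecMul`. -/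
def eigenEqn (p : Matrix m n ℝ × (n → ℝ) × ℝ) : (n → ℝ) × ℝ :=
  ((p.1 *ᵥ p.2.1) ᵥ* p.1 - p.2.2 • p.2.1, p.2.1 ⬝ᵥ p.2.1)

theorem eigenEqn_eq_of_mulVec_eq {X : Matrix m n ℝ} {u : n → ℝ} {μ : ℝ} (hu : u ⬝ᵥ u = 1)
    (hXu : (Xᵀ * X) *ᵥ u = μ • u) : eigenEqn (X, u, μ) = (0, 1) := by
  rw [eigenEqn, ← mulVec_transpose, mulVec_mulVec, hXu, sub_self, hu]

theorem eigenvalue_eq_dotProduct_mulVec {X : Matrix m n ℝ} {u : n → ℝ} {μ : ℝ}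
    (hu : u ⬝ᵥ u = 1) (hXu : (Xᵀ * X) *ᵥ u = μ • u) :
    μ = (X *ᵥ u) ⬝ᵥ (X *ᵥ u) := by
  rw [dotProduct_mulVec, ← mulVec_transpose, mulVec_mulVec, hXu, dotProduct_comm, dotProduct_smul,
    hu, smul_eq_mul, mul_one]

noncomputable def eigenEqnDeriv (A : Matrix m n ℝ) (v : n → ℝ) :
    Matrix m n ℝ × (n → ℝ) × ℝ →L[ℝ] (n → ℝ) × ℝ :=
  LinearMap.toContinuousLinearMap
    { toFun q := ((q.1 *ᵥ v + A *ᵥ q.2.1) ᵥ* A - q.2.2 • v, 2 * (v ⬝ᵥ q.2.1))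
      map_add' q r := by
        ext <;> simp [add_mulVec, mulVec_add, add_vecMul, dotProduct_add, add_smul] <;> ring
      map_smul' c q := by
        ext <;> simp [smul_mulVec, mulVec_smul, ← smul_add, smul_vecMul, dotProduct_smul] <;> ring }

theorem eigenEqnDeriv_apply (A : Matrix m n ℝ) (v : n → ℝ) (Y : Matrix m n ℝ) (y : n → ℝ)
    (ν : ℝ) : eigenEqnDeriv A v (Y, y, ν) = ((Y *ᵥ v + A *ᵥ y) ᵥ* A - ν • v, 2 * (v ⬝ᵥ y)) :=
  rfl

theorem hasStrictFDerivAt_eigenEqn {A : Matrix m n ℝ} {v : n → ℝ} (hAv : A *ᵥ v = 0) :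
    HasStrictFDerivAt eigenEqn (eigenEqnDeriv A v) (A, v, 0) := by
  set p : Matrix m n ℝ × (n → ℝ) × ℝ := (A, v, 0)
  have hX : HasStrictFDerivAt Prod.fst _ p := hasStrictFDerivAt_fst (𝕜 := ℝ)
  have hu : HasStrictFDerivAt (fun p => p.2.1) _ p := hasStrictFDerivAt_snd.fst (𝕜 := ℝ)
  have hμ : HasStrictFDerivAt (fun p => p.2.2) _ p := hasStrictFDerivAt_snd.snd (𝕜 := ℝ)
  have hXu := (mulVecBilin ℝ ℝ).toContinuousBilinearMap.hasStrictFDerivAt_of_bilinear hX hu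
  have hXuX := (vecMulBilin ℝ ℝ).toContinuousBilinearMap.hasStrictFDerivAt_of_bilinear hXu hX
  have huu := (dotProductBilin ℝ ℝ).toContinuousBilinearMap.hasStrictFDerivAt_of_bilinear hu hu
  refine ((hXuX.sub (hμ.smul hu)).prodMk huu).congr_fderiv
    (ContinuousLinearMap.ext fun ⟨Y, y, ν⟩ => ?_)
  change _ = ((Y *ᵥ v + A *ᵥ y) ᵥ* A - ν • v, 2 * (v ⬝ᵥ y))
  simp [p, hAv, add_vecMul, add_comm, dotProduct_comm y v, two_mul]

theorem eigenEqnDeriv_comp_inr_injective {A : Matrix m n ℝ} {v : n → ℝ} (hvv : v ⬝ᵥ v = 1)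
    (hAv : A *ᵥ v = 0) (hsimple : ∀ w : n → ℝ, (Aᵀ * A) *ᵥ w = 0 → ∃ c : ℝ, w = c • v) :
    Function.Injective (eigenEqnDeriv A v ∘L .inr ℝ (Matrix m n ℝ) ((n → ℝ) × ℝ)) := by
  rw [injective_iff_map_eq_zero]
  rintro ⟨y, ν⟩ h
  simp only [ContinuousLinearMap.comp_apply, ContinuousLinearMap.inr_apply, eigenEqnDeriv_apply,
    zero_mulVec, zero_add, Prod.mk_eq_zero, sub_eq_zero, mul_eq_zero, two_ne_zero,
    false_or] at h
  obtain ⟨hAAy, hvy⟩ := h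
  have hν : ν = 0 := by
    have hv_AAy : v ⬝ᵥ ((A *ᵥ y) ᵥ* A) = 0 := by
      rw [dotProduct_comm, ← dotProduct_mulVec, hAv, dotProduct_zero]
    rwa [hAAy, dotProduct_smul, hvv, smul_eq_mul, mul_one] at hv_AAy
  obtain ⟨c, rfl⟩ := hsimple y (by
    rw [← mulVec_mulVec, mulVec_transpose, hAAy, hν, zero_smul])
  rw [dotProduct_smul, hvv, smul_eq_mul, mul_one] at hvy
  simp [hvy, hν]

end EigenEquation

theorem eigenEqnDeriv_pinv_mulVec {b n : ℕ} {A : Matrix (Fin b) (Fin n) ℝ}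
    {B : Matrix (Fin n) (Fin b) ℝ} (hB : IsMoorePenrose A B) {v : Fin n → ℝ} (hAv : A *ᵥ v = 0)
    (Y : Matrix (Fin b) (Fin n) ℝ) :
    eigenEqnDeriv A v (0, B *ᵥ (Y *ᵥ v), 0) = eigenEqnDeriv A v (Y, 0, 0) := by
  rw [eigenEqnDeriv_apply, eigenEqnDeriv_apply, dotProduct_mulVec,
    hB.vecMul_eq_zero_of_mulVec_eq_zero hAv]
  simp only [zero_mulVec, zero_add, mulVec_zero, add_zero, zero_smul, sub_zero, zero_dotProduct,
    dotProduct_zero]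
  rw [← mulVec_transpose, ← mulVec_transpose, mulVec_mulVec, mulVec_mulVec,
    hB.transpose_mul_self_mul]

theorem fst_comp_implicitDeriv_eigenEqn {b n : ℕ} {A : Matrix (Fin b) (Fin n) ℝ}
    {B : Matrix (Fin n) (Fin b) ℝ} (hB : IsMoorePenrose A B) {v : Fin n → ℝ} (hAv : A *ᵥ v = 0)
    (hinv : (eigenEqnDeriv A v ∘L .inr ℝ _ _).IsInvertible) :
    .fst ℝ _ _ ∘L (-(eigenEqnDeriv A v ∘L .inr ℝ _ _).inverse ∘L (eigenEqnDeriv A v ∘L .inl ℝ _ _))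
      = LinearMap.toContinuousLinearMap (jacMap B v) := by
  refine ContinuousLinearMap.ext fun Y => ?_
  have h : (eigenEqnDeriv A v ∘L .inr ℝ _ _).inverse (eigenEqnDeriv A v (Y, 0))
      = (B *ᵥ (Y *ᵥ v), 0) :=
    hinv.inverse_apply_eq.mpr (eigenEqnDeriv_pinv_mulVec hB hAv Y).symm
  simp [h, jacMap, mulVec_mulVec]

/-- If `A` has a simple smallest singular value `0` with unit right singular vector `v`,
and `G` maps each matrix `X` to a unit eigenvector of `XᵀX` corresponding to its smallest
eigenvalue, with `G` continuous at `A` and `G A = v`, then `G` is differentiable at `A`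
with derivative `Y ↦ -A⁺ Y v`, i.e. Jacobian `-(vᵀ ⊗ A⁺)` in vectorized form. -/
theorem stmt_8 {b n : ℕ} (A : Matrix (Fin b) (Fin n) ℝ)
    (Apinv : Matrix (Fin n) (Fin b) ℝ) (hpinv : IsMoorePenrose A Apinv)
    (v : Fin n → ℝ) (hv : ∑ i, v i ^ 2 = 1) (hAv : A.mulVec v = 0)
    (hsimple : ∀ w : Fin n → ℝ, (Aᵀ * A).mulVec w = 0 → ∃ c : ℝ, w = c • v)
    (G : Matrix (Fin b) (Fin n) ℝ → (Fin n → ℝ))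
    (hGA : G A = v) (hGc : ContinuousAt G A)
    (hG : ∀ X : Matrix (Fin b) (Fin n) ℝ,
      (∑ i, (G X i) ^ 2 = 1) ∧
      ∃ μ : ℝ, (Xᵀ * X).mulVec (G X) = μ • G X ∧
        ∀ w : Fin n → ℝ, μ * (∑ i, (w i) ^ 2) ≤ w ⬝ᵥ ((Xᵀ * X).mulVec w)) :
    HasFDerivAt G (LinearMap.toContinuousLinearMap (jacMap Apinv v)) A := by
  have hdot : ∀ u : Fin n → ℝ, u ⬝ᵥ u = ∑ i, u i ^ 2 := fun u => by simp [dotProduct, sq]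
  choose hGunit μ hμ _ using hG
  have hvv : v ⬝ᵥ v = 1 := (hdot v).trans hv
  have hrayleigh : μ = fun X => (X *ᵥ G X) ⬝ᵥ (X *ᵥ G X) :=
    funext fun X => eigenvalue_eq_dotProduct_mulVec ((hdot _).trans (hGunit X)) (hμ X)
  have hlim : Tendsto (fun X => (X, G X, μ X)) (𝓝 A) (𝓝 (A, v, 0)) := by
    have hμA : μ A = 0 := by simp [hrayleigh, hGA, hAv]
    have hμc : ContinuousAt μ A := by rw [hrayleigh]; fun_prop
    simpa [ContinuousAt, hGA, hμA] using continuousAt_id.prodMk (hGc.prodMk hμc)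
  have hsol : ∀ X, eigenEqn (X, G X, μ X) = eigenEqn (A, v, 0) := fun X => by
    rw [eigenEqn_eq_of_mulVec_eq ((hdot _).trans (hGunit X)) (hμ X),
      eigenEqn_eq_of_mulVec_eq hvv (by rw [← mulVec_mulVec, hAv, mulVec_zero, zero_smul])]
  have hD := hasStrictFDerivAt_eigenEqn hAv
  have hinv := ContinuousLinearMap.isInvertible_of_injective
    (eigenEqnDeriv_comp_inr_injective hvv hAv hsimple)
  have hψ : ∀ᶠ X in 𝓝 A, G X = (hD.implicitFunctionOfProdDomain hinv X).1 :=
    (hlim.eventually (hD.eventually_apply_eq_iff_implicitFunctionOfProdDomain hinv)).mono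
      fun X h => by rw [h.mp (hsol X)]
  rw [← fst_comp_implicitDeriv_eigenEqn hpinv hAv hinv]
  exact (hD.hasStrictFDerivAt_implicitFunctionOfProdDomain hinv).hasFDerivAt.fst
    |>.congr_of_eventuallyEq hψ
end

section
/- Let Λ be a nilpotent d×d real matrix with Λ^d = 0, ζ > 0, M = Λ - (1/(3ζ))I, and C the d×d identity matrix. Then the solution Σ = ∫_0^∞ e^{Mt} e^{Mᵀt} dt of MΣ + ΣMᵀ + I = 0 equals the finite double sum Σ = ∑_{n=0}^{d-1} ∑_{m=0}^{d-1} (3ζ/2)^{n+m+1} ((n+m)!/(n!m!)) Λ^n (Λᵀ)^m. -/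
/-!
Since the scalar part of `M` commutes with the nilpotent `Λ`,
`e^{tM} = e^{-t/(3ζ)} ∑_{n<d} tⁿ/n! Λⁿ`, so the integrand is a finite combination of
`t^{n+m} e^{-2t/(3ζ)} Λⁿ (Λᵀ)ᵐ`, and the Gamma integral `∫₀^∞ tᵏ e^{-t/b} dt = k! b^{k+1}`
(with `b = 3ζ/2`) evaluates it termwise to `Σ = ∑ b^{n+m+1} C(n+m, n) Λⁿ (Λᵀ)ᵐ`.
The Lyapunov equation for this finite sum is algebraic: left multiplication by `Λ` and right
multiplication by `Λᵀ` shift one index each (the terms shifted past `d` vanish), and Pascal's rule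
for the coefficients gives `Λ Σ + Σ Λᵀ + I = b⁻¹ Σ`.
-/

open Matrix MeasureTheory

/-- The drift matrix `M = Λ - (1/(3ζ))I`. -/
noncomputable def driftM {d : ℕ} (Λ : Matrix (Fin d) (Fin d) ℝ) (ζ : ℝ) :
    Matrix (Fin d) (Fin d) ℝ :=
  Λ - (1 / (3 * ζ)) • 1

/-- The solution `Σ = ∫₀^∞ e^{Mt} e^{Mᵀt} dt`, entrywise. -/
noncomputable def lyapSolId {d : ℕ} (Λ : Matrix (Fin d) (Fin d) ℝ) (ζ : ℝ) :
    Matrix (Fin d) (Fin d) ℝ :=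
  Matrix.of fun i j => ∫ t in Set.Ioi (0:ℝ),
    (NormedSpace.exp (t • driftM Λ ζ) * (NormedSpace.exp (t • driftM Λ ζ))ᵀ) i j

open Finset

section Exponential

open scoped Nat

theorem NormedSpace.exp_eq_sum_of_pow_eq_zero {𝕂 𝔸 : Type*} [Field 𝕂] [CharZero 𝕂] [Ring 𝔸]
    [Algebra 𝕂 𝔸] [TopologicalSpace 𝔸] [IsTopologicalRing 𝔸] {x : 𝔸} {k : ℕ} (h : x ^ k = 0) :
    NormedSpace.exp x = ∑ n ∈ range k, (n !⁻¹ : 𝕂) • x ^ n := by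
  rw [NormedSpace.exp_eq_tsum 𝕂]
  exact tsum_eq_sum fun n hn => by
    rw [pow_eq_zero_of_le (by simpa using hn) h, smul_zero]

variable {m : Type*} [Fintype m] [DecidableEq m]

theorem Matrix.exp_smul_one (r : ℝ) :
    NormedSpace.exp (r • (1 : Matrix m m ℝ)) = Real.exp r • 1 := by
  rw [smul_one_eq_diagonal, exp_diagonal, smul_one_eq_diagonal, Real.exp_eq_exp_ℝ, Pi.exp_def]

theorem Matrix.exp_smul_sub_smul_one {Λ : Matrix m m ℝ} {k : ℕ} (hΛ : Λ ^ k = 0) (a t : ℝ) :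
    NormedSpace.exp (t • (Λ - a • 1))
      = ∑ n ∈ range k, (Real.exp (-(a * t)) * (t ^ n / n !)) • Λ ^ n := by
  have hcomm : Commute ((-(a * t)) • (1 : Matrix m m ℝ)) (t • Λ) :=
    (Commute.one_left _).smul_left _
  rw [show t • (Λ - a • 1) = (-(a * t)) • (1 : Matrix m m ℝ) + t • Λ by module,
    exp_add_of_commute _ _ hcomm, exp_smul_one,
    NormedSpace.exp_eq_sum_of_pow_eq_zero (𝕂 := ℝ) (by rw [smul_pow, hΛ, smul_zero]),
    smul_one_mul, smul_sum]
  simp only [smul_pow, smul_smul]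
  congr! 2
  ring

theorem Matrix.exp_smul_sub_smul_one_mul_transpose {Λ : Matrix m m ℝ} {k : ℕ} (hΛ : Λ ^ k = 0)
    (a t : ℝ) :
    NormedSpace.exp (t • (Λ - a • 1)) * (NormedSpace.exp (t • (Λ - a • 1)))ᵀ
      = ∑ n ∈ range k, ∑ l ∈ range k,
          (t ^ (n + l) * Real.exp (-(2 * a * t)) / (n ! * l !)) • (Λ ^ n * Λᵀ ^ l) := by
  rw [exp_smul_sub_smul_one hΛ, transpose_sum, sum_mul_sum]
  refine sum_congr rfl fun n _ => sum_congr rfl fun l _ => ?_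
  rw [transpose_smul, transpose_pow, smul_mul_smul_comm]
  congr 1
  rw [pow_add, show -(2 * a * t) = -(a * t) + -(a * t) by ring, Real.exp_add]
  field_simp

end Exponential

section Integral

open Real Set
open scoped Nat

theorem integral_pow_mul_exp_neg_mul_Ioi (k : ℕ) {c : ℝ} (hc : 0 < c) :
    ∫ t in Ioi 0, t ^ k * exp (-(c * t)) = k ! / c ^ (k + 1) := by
  have key := integral_rpow_mul_exp_neg_mul_Ioi (by positivity : (0 : ℝ) < k + 1) hc
  rw [add_sub_cancel_right, Gamma_nat_eq_factorial, ← Nat.cast_succ, rpow_natCast] at key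
  simp_rw [rpow_natCast] at key
  rw [key, _root_.one_div_pow, one_div_mul_eq_div]

theorem integrableOn_pow_mul_exp_neg_mul_Ioi (k : ℕ) {c : ℝ} (hc : 0 < c) :
    IntegrableOn (fun t => t ^ k * exp (-(c * t))) (Ioi 0) :=
  .of_integral_ne_zero (by rw [integral_pow_mul_exp_neg_mul_Ioi k hc]; positivity)

theorem Matrix.of_integral_sum_smul {α ι m n : Type*} [MeasurableSpace α] {μ : Measure α}
    (s : Finset ι) (f : ι → α → ℝ) (X : ι → Matrix m n ℝ) (hf : ∀ l ∈ s, Integrable (f l) μ) :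
    Matrix.of (fun i j => ∫ x, (∑ l ∈ s, f l x • X l) i j ∂μ) = ∑ l ∈ s, (∫ x, f l x ∂μ) • X l := by
  ext i j
  simp only [of_apply, sum_apply, smul_apply, smul_eq_mul]
  rw [integral_finsetSum _ fun l hl => (hf l hl).mul_const _]
  simp only [integral_mul_const]

end Integral

section Lyapunov

variable {𝕜 R : Type*} [Field 𝕜] [Ring R] [Algebra 𝕜 R]

theorem Finset.sum_range_succ_eq_of_eq_zero {M : Type*} [AddCommMonoid M] {d : ℕ} (F : ℕ → M)
    (h0 : F 0 = 0) (hd : F d = 0) :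
    ∑ n ∈ range d, F (n + 1) = ∑ n ∈ range d, F n := by
  rw [← add_zero (∑ n ∈ range d, F (n + 1)), ← h0, ← sum_range_succ', sum_range_succ, hd,
    add_zero]

theorem mul_sum_sum_smul_pow_mul_pow {A : R} {d : ℕ} (hA : A ^ d = 0) (B : R) (f : ℕ → ℕ → 𝕜) :
    A * ∑ n ∈ range d, ∑ m ∈ range d, f n m • (A ^ n * B ^ m)
      = ∑ n ∈ range d, ∑ m ∈ range d,
          (if n = 0 then 0 else f (n - 1) m) • (A ^ n * B ^ m) := by
  refine .trans ?_ (sum_range_succ_eq_of_eq_zero (fun n => ∑ m ∈ range d,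
    (if n = 0 then 0 else f (n - 1) m) • (A ^ n * B ^ m)) (by simp) (by simp [hA]))
  simp only [mul_sum, mul_smul_comm, ← mul_assoc, ← pow_succ', Nat.add_sub_cancel,
    if_neg (Nat.succ_ne_zero _)]

theorem sum_sum_smul_pow_mul_pow_mul (A : R) {B : R} {d : ℕ} (hB : B ^ d = 0) (f : ℕ → ℕ → 𝕜) :
    (∑ n ∈ range d, ∑ m ∈ range d, f n m • (A ^ n * B ^ m)) * B
      = ∑ n ∈ range d, ∑ m ∈ range d,
          (if m = 0 then 0 else f n (m - 1)) • (A ^ n * B ^ m) := by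
  rw [sum_mul]
  refine sum_congr rfl fun n _ => .trans ?_ (sum_range_succ_eq_of_eq_zero (fun m =>
    (if m = 0 then 0 else f n (m - 1)) • (A ^ n * B ^ m)) (by simp) (by simp [hB]))
  simp only [sum_mul, smul_mul_assoc, mul_assoc, ← pow_succ, Nat.add_sub_cancel,
    if_neg (Nat.succ_ne_zero _)]

theorem sum_sum_ite_smul_pow_mul_pow {A : R} {d : ℕ} (hA : A ^ d = 0) (B : R) :
    ∑ n ∈ range d, ∑ m ∈ range d, (if n = 0 ∧ m = 0 then 1 else 0 : 𝕜) • (A ^ n * B ^ m) = 1 := by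
  cases d with
  | zero => simp [← hA]
  | succ d => simp [ite_and]

def lyapunovCoeff (b : 𝕜) (n m : ℕ) : 𝕜 := b ^ (n + m + 1) * (n + m).choose n

theorem lyapunovCoeff_pascal {b : 𝕜} (hb : b ≠ 0) (n m : ℕ) :
    (if n = 0 then 0 else lyapunovCoeff b (n - 1) m) +
        (if m = 0 then 0 else lyapunovCoeff b n (m - 1)) + (if n = 0 ∧ m = 0 then 1 else 0)
      = b⁻¹ * lyapunovCoeff b n m := by
  rcases n with _ | n <;> rcases m with _ | m
  case succ.succ =>
    simp only [lyapunovCoeff, n.succ_ne_zero, m.succ_ne_zero, if_false, Nat.add_sub_cancel,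
      and_false, add_zero, show n + (m + 1) = n + m + 1 by omega,
      show n + 1 + m = n + m + 1 by omega, show n + 1 + (m + 1) = n + m + 1 + 1 by omega,
      Nat.choose_succ_succ, Nat.cast_add]
    field_simp
    ring
  all_goals simp [lyapunovCoeff, pow_succ, mul_comm b⁻¹, hb]

theorem lyapunovCoeff_eq_factorial [CharZero 𝕜] (b : 𝕜) (n m : ℕ) :
    lyapunovCoeff b n m
      = b ^ (n + m + 1) * (((n + m).factorial : 𝕜) / (n.factorial * m.factorial)) := by
  rw [lyapunovCoeff, Nat.cast_add_choose]

def lyapunovSum (b : 𝕜) (A B : R) (d : ℕ) : R :=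
  ∑ n ∈ range d, ∑ m ∈ range d, lyapunovCoeff b n m • (A ^ n * B ^ m)

theorem mul_lyapunovSum_add_lyapunovSum_mul {b : 𝕜} (hb : b ≠ 0) {A B : R} {d : ℕ}
    (hA : A ^ d = 0) (hB : B ^ d = 0) :
    A * lyapunovSum b A B d + lyapunovSum b A B d * B + 1 = b⁻¹ • lyapunovSum b A B d := by
  rw [lyapunovSum, mul_sum_sum_smul_pow_mul_pow hA, sum_sum_smul_pow_mul_pow_mul _ hB,
    ← sum_sum_ite_smul_pow_mul_pow (𝕜 := 𝕜) hA B]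
  simp only [smul_sum, smul_smul, ← sum_add_distrib, ← add_smul, lyapunovCoeff_pascal hb]

end Lyapunov

theorem lyapSolId_eq_lyapunovSum {d : ℕ} {Λ : Matrix (Fin d) (Fin d) ℝ} (hΛ : Λ ^ d = 0)
    {ζ : ℝ} (hζ : 0 < ζ) :
    lyapSolId Λ ζ = lyapunovSum (3 * ζ / 2) Λ Λᵀ d := by
  have hc : 0 < 2 * (1 / (3 * ζ)) := by positivity
  simp_rw [lyapSolId, driftM, exp_smul_sub_smul_one_mul_transpose hΛ, ← sum_product']
  rw [of_integral_sum_smul _ _ _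
    fun p _ => (integrableOn_pow_mul_exp_neg_mul_Ioi (p.1 + p.2) hc).div_const _,
    lyapunovSum, ← sum_product']
  refine sum_congr rfl fun p _ => ?_
  rw [integral_div, integral_pow_mul_exp_neg_mul_Ioi _ hc, lyapunovCoeff_eq_factorial,
    show 2 * (1 / (3 * ζ)) = (3 * ζ / 2)⁻¹ by ring, inv_pow, div_inv_eq_mul]
  congr 1
  ring

/-- For nilpotent `Λ` (`Λ^d = 0`), `ζ > 0` and `M = Λ - (1/(3ζ))I`, the solution
`Σ = ∫₀^∞ e^{Mt} e^{Mᵀt} dt` of `MΣ + ΣMᵀ + I = 0` equals the finite double sum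
`∑_{n,m=0}^{d-1} (3ζ/2)^{n+m+1} ((n+m)!/(n!m!)) Λⁿ (Λᵀ)ᵐ`. -/
theorem stmt_18 (d : ℕ) (Λ : Matrix (Fin d) (Fin d) ℝ) (hΛ : Λ ^ d = 0)
    (ζ : ℝ) (hζ : 0 < ζ) :
    driftM Λ ζ * lyapSolId Λ ζ + lyapSolId Λ ζ * (driftM Λ ζ)ᵀ + 1 = 0 ∧
    lyapSolId Λ ζ
      = ∑ n ∈ Finset.range d, ∑ m ∈ Finset.range d,
          ((3 * ζ / 2) ^ (n + m + 1) *
            (((n + m).factorial : ℝ) / ((n.factorial : ℝ) * (m.factorial : ℝ)))) •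
            (Λ ^ n * (Λᵀ) ^ m) := by
  rw [lyapSolId_eq_lyapunovSum hΛ hζ]
  constructor
  · have hΛT : Λᵀ ^ d = 0 := by rw [← transpose_pow, hΛ, transpose_zero]
    have key := mul_lyapunovSum_add_lyapunovSum_mul (by positivity : 3 * ζ / 2 ≠ 0) hΛ hΛT
    calc _ = (Λ * _ + _ * Λᵀ + 1) - (3 * ζ / 2)⁻¹ • lyapunovSum (3 * ζ / 2) Λ Λᵀ d := by
          rw [driftM, transpose_sub, transpose_smul, transpose_one, sub_mul, mul_sub, smul_mul,
            one_mul, mul_smul_comm, mul_one]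
          module
      _ = 0 := by rw [key, sub_self]
  · simp_rw [lyapunovSum, lyapunovCoeff_eq_factorial]
end
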